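/- The 5-dimensional nilpotent commutative associative algebra A₀₄ degenerates to A₀₈: the structure λ of A₀₈ lies in the closure of the GL(5,ℂ)-orbit O(μ) of the structure μ of A₀₄ (closure in the standard topology on the space of bilinear maps ℂ⁵ × ℂ⁵ → ℂ⁵). -/

import Mathlib

open ContinuousLinearMap

/-- The underlying space `ℂⁿ`. -/
abbrev Vn (n : ℕ) := Fin n → ℂ

/-- The space of bilinear maps `ℂⁿ × ℂⁿ → ℂⁿ` (as continuous linear maps in two
arguments), carrying its standard topology as a finite-dimensional complex vector space. -/
abbrev Bil (n : ℕ) := Vn n →L[ℂ] Vn n →L[ℂ] Vn n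

/-- The action of `GL(n, ℂ)` on bilinear maps: `(g · μ)(x, y) = g (μ (g⁻¹ x) (g⁻¹ y))`. -/
noncomputable def act {n : ℕ} (g : Vn n ≃L[ℂ] Vn n) (μ : Bil n) : Bil n :=
  ((compL ℂ (Vn n) (Vn n) (Vn n)).flip (g.symm : Vn n →L[ℂ] Vn n)).comp
    (((compL ℂ (Vn n) (Vn n) (Vn n)) (g : Vn n →L[ℂ] Vn n)).comp
      (μ.comp (g.symm : Vn n →L[ℂ] Vn n)))

@[simp] lemma act_apply {n : ℕ} (g : Vn n ≃L[ℂ] Vn n) (μ : Bil n) (x y : Vn n) :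
    act g μ x y = g (μ (g.symm x) (g.symm y)) := rfl

/-- The orbit `O(μ)` of a bilinear map under the `GL(n, ℂ)`-action. -/
noncomputable def orbit {n : ℕ} (μ : Bil n) : Set (Bil n) :=
  {ν | ∃ g : Vn n ≃L[ℂ] Vn n, ν = act g μ}

/-- The standard basis `e₁, …, e₅` of `ℂ⁵` (zero-indexed: `e i` is `e_{i+1}`). -/
def e (i : Fin 5) : Vn 5 := Pi.single i 1

/-- Multiplication table of the algebra `𝐀04` (entry `(i, j)` is `eᵢ · eⱼ`). -/
def tblA04 : Fin 5 → Fin 5 → Vn 5 :=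
  ![![e 2, e 3, 0, e 4, 0],
   ![e 3, 0, e 4, 0, 0],
   ![0, e 4, 0, 0, 0],
   ![e 4, 0, 0, 0, 0],
   ![0, 0, 0, 0, 0]]

/-- Multiplication table of the algebra `𝐀08` (entry `(i, j)` is `eᵢ · eⱼ`). -/
def tblA08 : Fin 5 → Fin 5 → Vn 5 :=
  ![![e 2, e 4, e 3, 0, 0],
   ![e 4, e 3, 0, 0, 0],
   ![e 3, 0, 0, 0, 0],
   ![0, 0, 0, 0, 0],
   ![0, 0, 0, 0, 0]]

/-!
For `t ≠ 0` take the basis `f₁ = e₁ + e₂`, `f₂ = 3t e₂ + e₃/(2t)`, `f₃ = e₃ + 2e₄`, `f₄ = 3e₅`,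
`f₅ = 3t e₄ + e₅/(2t)` of `ℂ⁵`. In it the multiplication of `𝐀04` reads `f₁² = f₃`, `f₂² = f₄`,
`f₁f₃ = f₄`, `f₁f₂ = f₅`, `f₂f₃ = f₁f₅ = t f₄`: it is the table of `𝐀08` plus `t` times a fixed
perturbation `ρ`. So `λ + tρ ∈ O(μ)` for every `t ≠ 0`, and `λ` is its limit as `t → 0`.
-/

lemma bil_apply_eq_sum {n : ℕ} (A : Bil n) (x y : Vn n) :
    A x y = ∑ i, ∑ j, (x i * y j) • A (Pi.single i 1) (Pi.single j 1) := by
  conv_lhs => rw [pi_eq_sum_univ' x, pi_eq_sum_univ' y]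
  simp only [map_sum, map_smul, sum_apply, smul_apply, Finset.smul_sum, smul_smul]
  rw [Finset.sum_comm]
  simp only [mul_comm (y _)]

lemma apply_eq_of_tblA04 {μ : Bil 5} (hμ : ∀ i j : Fin 5, μ (e i) (e j) = tblA04 i j)
    (x y : Vn 5) :
    μ x y = ![0, 0, x 0 * y 0, x 0 * y 1 + x 1 * y 0,
      x 0 * y 3 + x 1 * y 2 + x 2 * y 1 + x 3 * y 0] := by
  unfold e at hμ
  rw [bil_apply_eq_sum]
  simp only [hμ]
  ext k
  fin_cases k <;> simp [Fin.sum_univ_five, tblA04, e]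

lemma apply_eq_of_tblA08 {lam : Bil 5} (hlam : ∀ i j : Fin 5, lam (e i) (e j) = tblA08 i j)
    (x y : Vn 5) :
    lam x y = ![0, 0, x 0 * y 0, x 0 * y 2 + x 1 * y 1 + x 2 * y 0, x 0 * y 1 + x 1 * y 0] := by
  unfold e at hlam
  rw [bil_apply_eq_sum]
  simp only [hlam]
  ext k
  fin_cases k <;> simp [Fin.sum_univ_five, tblA08, e]

noncomputable def basisMatrix (t : ℂ) : Matrix (Fin 5) (Fin 5) ℂ :=
  !![1, 0, 0, 0, 0;
     1, 3 * t, 0, 0, 0;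
     0, 1 / (2 * t), 1, 0, 0;
     0, 0, 2, 0, 3 * t;
     0, 0, 0, 3, 1 / (2 * t)]

lemma det_basisMatrix (t : ℂ) : (basisMatrix t).det = -27 * t ^ 2 := by
  simp [basisMatrix, Matrix.det_succ_row_zero, Fin.sum_univ_succ]
  ring

noncomputable def basisChange (t : ℂ) (ht : t ≠ 0) : Vn 5 ≃L[ℂ] Vn 5 :=
  (Matrix.toLin' (basisMatrix t)).toContinuousLinearMap.toContinuousLinearEquivOfDetNeZero <| by
    simp [LinearMap.det_toLin', det_basisMatrix, ht]

lemma basisChange_apply (t : ℂ) (ht : t ≠ 0) (x : Vn 5) :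
    basisChange t ht x = ![x 0, x 0 + 3 * t * x 1, x 1 / (2 * t) + x 2,
      2 * x 2 + 3 * t * x 4, 3 * x 3 + x 4 / (2 * t)] := by
  ext k
  fin_cases k <;>
    simp [basisChange, basisMatrix, Matrix.mulVec, dotProduct, Fin.sum_univ_five] <;> ring

noncomputable def perturbation : Bil 5 :=
  (proj 1).smulRight ((proj 2).smulRight (e 3)) + (proj 2).smulRight ((proj 1).smulRight (e 3)) +
  (proj 0).smulRight ((proj 4).smulRight (e 3)) + (proj 4).smulRight ((proj 0).smulRight (e 3))

lemma perturbation_apply (x y : Vn 5) :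
    perturbation x y = (x 1 * y 2 + x 2 * y 1 + x 0 * y 4 + x 4 * y 0) • e 3 := by
  simp only [perturbation, add_apply, smulRight_apply, proj_apply, smul_apply, add_smul, smul_smul]

lemma mem_orbit_of_apply_eq {n : ℕ} {μ ν : Bil n} (F : Vn n ≃L[ℂ] Vn n)
    (h : ∀ x y, μ (F x) (F y) = F (ν x y)) : ν ∈ orbit μ :=
  ⟨F.symm, by ext x y; simp [h]⟩

open Filter Topology in
lemma mem_closure_of_add_smul_mem {𝕜 E : Type*} [NontriviallyNormedField 𝕜] [AddCommGroup E]
    [Module 𝕜 E] [TopologicalSpace E] [ContinuousAdd E] [ContinuousSMul 𝕜 E] {s : Set E}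
    {x v : E} (h : ∀ t : 𝕜, t ≠ 0 → x + t • v ∈ s) : x ∈ closure s := by
  have hlim : Tendsto (fun t : 𝕜 => x + t • v) (𝓝[≠] 0) (𝓝 x) := by
    have hc : Continuous fun t : 𝕜 => x + t • v := by fun_prop
    simpa using (hc.tendsto 0).mono_left nhdsWithin_le_nhds
  exact mem_closure_of_tendsto hlim (eventually_nhdsWithin_of_forall h)

lemma add_smul_perturbation_mem_orbit {μ lam : Bil 5}
    (hμ : ∀ i j : Fin 5, μ (e i) (e j) = tblA04 i j)
    (hlam : ∀ i j : Fin 5, lam (e i) (e j) = tblA08 i j) {t : ℂ} (ht : t ≠ 0) :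
    lam + t • perturbation ∈ orbit μ := by
  refine mem_orbit_of_apply_eq (basisChange t ht) fun x y => ?_
  rw [add_apply, smul_apply, add_apply, smul_apply, apply_eq_of_tblA04 hμ, apply_eq_of_tblA08 hlam,
    perturbation_apply, basisChange_apply, basisChange_apply, basisChange_apply]
  ext k
  fin_cases k <;> simp [e] <;> field_simp <;> ring

/-- The $5$-dimensional nilpotent commutative associative algebra `𝐀04` degenerates to
`𝐀08`: the structure `λ` of `𝐀08` lies in the closure of
the `GL(5, ℂ)`-orbit `O(μ)` of the structure `μ` of `𝐀04`. -/
theorem A04_deg_A08 (μ lam : Bil 5)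
    (hμ : ∀ i j : Fin 5, μ (e i) (e j) = tblA04 i j)
    (hlam : ∀ i j : Fin 5, lam (e i) (e j) = tblA08 i j) :
    lam ∈ closure (orbit μ) :=
  mem_closure_of_add_smul_mem fun _ ht => add_smul_perturbation_mem_orbit hμ hlam ht
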